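/- Let W be an N×N doubly stochastic real matrix with strictly positive diagonal entries (W_{ii} > 0 for all i) and let n ∈ ℕ. Then the linear averaging map 𝑾 : X → X defined by (𝑾 x)_i = ∑_j W_{ij} • x_j on X = Fin N → EuclideanSpace ℝ (Fin n) is a paracontraction with respect to the norm ‖·‖_{2,2}: it is continuous, and ‖𝑾 x − y‖_{2,2} < ‖x − y‖_{2,2} for all x, y ∈ X such that x is not a fixed point of 𝑾 and y is a fixed point of 𝑾. -/

import Mathlib

open scoped BigOperators

noncomputable section

/-- A matrix is doubly stochastic: nonnegative entries, rows and columns sum to 1. -/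
def DoublyStochastic {N : ℕ} (W : Matrix (Fin N) (Fin N) ℝ) : Prop :=
  (∀ i j, 0 ≤ W i j) ∧ (∀ i, ∑ j, W i j = 1) ∧ (∀ j, ∑ i, W i j = 1)

/-- The averaging map `(𝑾 x)_i = ∑ j, W i j • x j` (Kronecker product `W ⊗ I_n`). -/
def avgMap {N n : ℕ} (W : Matrix (Fin N) (Fin N) ℝ)
    (x : PiLp 2 fun _ : Fin N => EuclideanSpace ℝ (Fin n)) :
    PiLp 2 fun _ : Fin N => EuclideanSpace ℝ (Fin n) :=
  WithLp.toLp 2 fun i => ∑ j, W i j • x j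

/-! Since `‖·‖²` is strictly convex, Jensen's inequality gives `‖(𝑾 z)_i‖² ≤ ∑ j, W i j * ‖z j‖²`
for each block, strictly when `(𝑾 z)_i ≠ z_i`, because `W i i > 0` makes `z_i` one of the points
being averaged. Summing over `i` and using the column sums yields `‖𝑾 z‖ < ‖z‖` whenever
`𝑾 z ≠ z`; by linearity this applies to `z = x - y` when `𝑾 y = y`. -/

section Jensen

variable {ι E : Type*} [Fintype ι] [NormedAddCommGroup E] [InnerProductSpace ℝ E]

theorem strictConvexOn_norm_sq : StrictConvexOn ℝ Set.univ fun x : E => ‖x‖ ^ 2 :=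
  -- 2-strongly convex: subtracting `2 / 2 * ‖x‖ ^ 2` leaves the constant `0`.
  (strongConvexOn_iff_convex.2 (by simpa using convexOn_const (0 : ℝ) convex_univ) :
    StrongConvexOn Set.univ 2 fun x : E => ‖x‖ ^ 2).strictConvexOn two_pos

theorem norm_sum_smul_sq_le {w : ι → ℝ} (h₀ : ∀ i, 0 ≤ w i) (h₁ : ∑ i, w i = 1) (v : ι → E) :
    ‖∑ i, w i • v i‖ ^ 2 ≤ ∑ i, w i * ‖v i‖ ^ 2 :=
  strictConvexOn_norm_sq.convexOn.map_sum_le (fun i _ => h₀ i) h₁ fun _ _ => Set.mem_univ _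

theorem norm_sum_smul_sq_lt {w : ι → ℝ} (h₀ : ∀ i, 0 ≤ w i) (h₁ : ∑ i, w i = 1) {v : ι → E}
    {k : ι} (hk : 0 < w k) (hne : ∑ i, w i • v i ≠ v k) :
    ‖∑ i, w i • v i‖ ^ 2 < ∑ i, w i * ‖v i‖ ^ 2 := by
  refine (strictConvexOn_norm_sq.map_sum_lt_iff_of_nonneg (fun i _ => h₀ i) h₁
    fun _ _ => Set.mem_univ _).2 ?_
  contrapose! hne
  calc ∑ i, w i • v i = ∑ i, w i • v k := by
        refine Finset.sum_congr rfl fun i hi => ?_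
        obtain hw | hw := eq_or_ne (w i) 0
        · simp [hw]
        · rw [hne i hi k (Finset.mem_univ k) hw hk.ne']
    _ = v k := by rw [← Finset.sum_smul, h₁, one_smul]

end Jensen

section avgMap

variable {N n : ℕ} {W : Matrix (Fin N) (Fin N) ℝ}

theorem avgMap_apply (x : PiLp 2 fun _ : Fin N => EuclideanSpace ℝ (Fin n)) (i : Fin N) :
    avgMap W x i = ∑ j, W i j • x j := rfl

theorem avgMap_sub (x y : PiLp 2 fun _ : Fin N => EuclideanSpace ℝ (Fin n)) :
    avgMap W (x - y) = avgMap W x - avgMap W y :=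
  PiLp.ext fun i => by simp [avgMap_apply, smul_sub]

theorem continuous_avgMap :
    Continuous (avgMap W : (PiLp 2 fun _ : Fin N => EuclideanSpace ℝ (Fin n)) → _) := by
  unfold avgMap; fun_prop

theorem norm_avgMap_lt (hW : DoublyStochastic W) (hdiag : ∀ i, 0 < W i i)
    {z : PiLp 2 fun _ : Fin N => EuclideanSpace ℝ (Fin n)} (hz : avgMap W z ≠ z) :
    ‖avgMap W z‖ < ‖z‖ := by
  obtain ⟨h₀, hrow, hcol⟩ := hW
  obtain ⟨i₀, hi₀⟩ : ∃ i, avgMap W z i ≠ z i := by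
    by_contra! h
    exact hz (PiLp.ext h)
  refine lt_of_pow_lt_pow_left₀ 2 (norm_nonneg z) ?_
  calc ‖avgMap W z‖ ^ 2 = ∑ i, ‖∑ j, W i j • z j‖ ^ 2 := PiLp.norm_sq_eq_of_L2 _ _
    _ < ∑ i, ∑ j, W i j * ‖z j‖ ^ 2 :=
        Finset.sum_lt_sum (fun i _ => norm_sum_smul_sq_le (h₀ i) (hrow i) z)
          ⟨i₀, Finset.mem_univ _, norm_sum_smul_sq_lt (h₀ i₀) (hrow i₀) (hdiag i₀) hi₀⟩
    _ = ∑ j, ‖z j‖ ^ 2 := by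
        rw [Finset.sum_comm]; simp [← Finset.sum_mul, hcol]
    _ = ‖z‖ ^ 2 := (PiLp.norm_sq_eq_of_L2 _ _).symm

end avgMap

/-- Lemma 2, second part: the averaging map of a doubly stochastic matrix with
strictly positive diagonal is a paracontraction w.r.t. the mixed norm `‖·‖_{2,2}`. -/
theorem doubly_stochastic_avgMap_paracontraction
    (N n : ℕ) (W : Matrix (Fin N) (Fin N) ℝ) (hW : DoublyStochastic W)
    (hdiag : ∀ i, 0 < W i i) :
    Continuous (avgMap W : (PiLp 2 fun _ : Fin N => EuclideanSpace ℝ (Fin n)) →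
        (PiLp 2 fun _ : Fin N => EuclideanSpace ℝ (Fin n))) ∧
    ∀ x y : PiLp 2 fun _ : Fin N => EuclideanSpace ℝ (Fin n),
      avgMap W x ≠ x → avgMap W y = y → ‖avgMap W x - y‖ < ‖x - y‖ := by
  refine ⟨continuous_avgMap, fun x y hx hy => ?_⟩
  have hxy : avgMap W (x - y) ≠ x - y := by
    rwa [avgMap_sub, hy, Ne, sub_left_inj]
  simpa [avgMap_sub, hy] using norm_avgMap_lt hW hdiag hxy
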